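/- arXiv:1006.0302 — 4 statements merged into one kernel-verified Lean document; each statement's English description precedes it below -/
import Mathlib

section
/- For strictly positive density matrices ρ and σ, the quantity F_min(ρ,σ), defined as the supremum of the classical fidelity F(p,q) = Σ_x √(p(x)q(x)) over all triples (Φ, p, q) where Φ is a completely positive trace-preserving map sending probability distribution p to ρ and q to σ, equals tr(ρ √(ρ^{-1/2} σ ρ^{-1/2})). -/
open Matrix BigOperators
open scoped ComplexOrder Classical

noncomputable def msqrt {n : Type*} [Fintype n] [DecidableEq n]
    (A : Matrix n n ℂ) : Matrix n n ℂ :=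
  if h : A.PosSemidef then (h.1.eigenvectorUnitary : Matrix n n ℂ) *
    diagonal ((↑) ∘ Real.sqrt ∘ h.1.eigenvalues) * (star h.1.eigenvectorUnitary : Matrix n n ℂ)
  else 0

noncomputable def gm {n : Type*} [Fintype n] [DecidableEq n]
    (A B : Matrix n n ℂ) : Matrix n n ℂ :=
  msqrt A * msqrt ((msqrt A)⁻¹ * B * (msqrt A)⁻¹) * msqrt A

def IsDensity {n : Type*} [Fintype n] (ρ : Matrix n n ℂ) : Prop :=
  ρ.PosSemidef ∧ ρ.trace = 1

structure IsReverseTest {d m : ℕ} (ρ σ : Matrix (Fin d) (Fin d) ℂ)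
    (R : Fin m → Matrix (Fin d) (Fin d) ℂ) (p q : Fin m → ℝ) : Prop where
  states : ∀ x, IsDensity (R x)
  p_nonneg : ∀ x, 0 ≤ p x
  q_nonneg : ∀ x, 0 ≤ q x
  p_sum : ∑ x, p x = 1
  q_sum : ∑ x, q x = 1
  rho_eq : ∑ x, (p x : ℂ) • R x = ρ
  sigma_eq : ∑ x, (q x : ℂ) • R x = σ

noncomputable def Fmin {d : ℕ} (ρ σ : Matrix (Fin d) (Fin d) ℂ) : ℝ :=
  sSup {r : ℝ | ∃ (m : ℕ) (R : Fin m → Matrix (Fin d) (Fin d) ℂ) (p q : Fin m → ℝ),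
    IsReverseTest ρ σ R p q ∧ r = ∑ x, Real.sqrt (p x * q x)}

noncomputable def Dmax {d : ℕ} (ρ σ : Matrix (Fin d) (Fin d) ℂ) : ℝ :=
  sInf {r : ℝ | ∃ (m : ℕ) (R : Fin m → Matrix (Fin d) (Fin d) ℂ) (p q : Fin m → ℝ),
    IsReverseTest ρ σ R p q ∧ r = (∑ x, |p x - q x|) / 2}

noncomputable def choiMatrix {d e : ℕ}
    (Λ : Matrix (Fin d) (Fin d) ℂ →ₗ[ℂ] Matrix (Fin e) (Fin e) ℂ) :
    Matrix (Fin d × Fin e) (Fin d × Fin e) ℂ :=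
  Matrix.of fun pr qr => Λ (Matrix.single pr.1 qr.1 1) pr.2 qr.2

def IsCPTP {d e : ℕ}
    (Λ : Matrix (Fin d) (Fin d) ℂ →ₗ[ℂ] Matrix (Fin e) (Fin e) ℂ) : Prop :=
  (choiMatrix Λ).PosSemidef ∧ ∀ A, (Λ A).trace = A.trace

noncomputable def mcfc {n : Type*} [Fintype n] [DecidableEq n]
    (f : ℝ → ℝ) (A : Matrix n n ℂ) : Matrix n n ℂ :=
  if h : A.IsHermitian then h.cfc f else 0

def IsOperatorMonotoneOnNonneg (f : ℝ → ℝ) : Prop :=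
  ∀ (d : ℕ) (A B : Matrix (Fin d) (Fin d) ℂ), A.PosSemidef → B.PosSemidef →
    (B - A).PosSemidef → (mcfc f B - mcfc f A).PosSemidef

noncomputable def traceNorm {n : Type*} [Fintype n] [DecidableEq n]
    (A : Matrix n n ℂ) : ℝ :=
  ((msqrt (Aᴴ * A)).trace).re

/-!
For a reverse test `(R, p, q)` of `{ρ, σ}` put `X = ∑ₓ √(pₓ qₓ) Rₓ`, so that `tr X = F(p, q)`.
The block matrix `[[ρ, X], [X, σ]] = ∑ₓ [[pₓ, √(pₓqₓ)], [√(pₓqₓ), qₓ]] ⊗ Rₓ` is positive, hence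
`X ρ⁻¹ X ≤ σ` (Schur complement). Conjugating by `ρ^{-1/2}` and using operator monotonicity of
the square root gives `X ≤ ρ # σ := ρ^{1/2} (ρ^{-1/2} σ ρ^{-1/2})^{1/2} ρ^{1/2}`, so
`F(p, q) ≤ tr (ρ # σ)`. Conversely, diagonalise `ρ^{-1/2} σ ρ^{-1/2} = V diag(λ) V*` and let `wᵢ`
be the columns of `W = ρ^{1/2} V`: the states `wᵢ wᵢ* / ‖wᵢ‖²` with `pᵢ = ‖wᵢ‖²`, `qᵢ = λᵢ pᵢ`
form a reverse test with `X = W diag(√λ) W* = ρ # σ`.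
-/

open scoped MatrixOrder Matrix.Norms.L2Operator

lemma mul_nonsing_inv_mul_nonsing_inv_mul {n α : Type*} [Fintype n] [DecidableEq n] [CommRing α]
    {s : Matrix n n α} (hs : IsUnit s) (X : Matrix n n α) : s * (s⁻¹ * X * s⁻¹) * s = X := by
  have hdet := (isUnit_iff_isUnit_det s).mp hs
  simp only [← mul_assoc, mul_nonsing_inv s hdet, one_mul]
  rw [mul_assoc, nonsing_inv_mul s hdet, mul_one]

lemma sum_smul_vecMulVec_col {n ι α : Type*} [Fintype ι] [DecidableEq ι] [CommSemiring α]
    [StarRing α] (W : Matrix n ι α) (c : ι → α) :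
    ∑ i, c i • vecMulVec (W.col i) (star (W.col i)) = W * diagonal c * Wᴴ := by
  ext a b
  simp [Matrix.sum_apply, vecMulVec_apply, mul_apply, diagonal_apply]
  exact Finset.sum_congr rfl fun i _ => by ring

lemma ofReal_sum_eq_trace_sum_smul {ι n : Type*} [Fintype ι] [Fintype n] {R : ι → Matrix n n ℂ}
    (hR : ∀ x, (R x).trace = 1) (c : ι → ℝ) :
    ((∑ x, c x : ℝ) : ℂ) = (∑ x, (c x : ℂ) • R x).trace := by
  simp [trace_sum, hR]

lemma posSemidef_fromBlocks_smul {n : Type*} [Fintype n] [DecidableEq n] {R : Matrix n n ℂ}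
    (hR : R.PosSemidef) (a b : ℝ) :
    (fromBlocks ((a * a) • R) ((a * b) • R) ((a * b) • R) ((b * b) • R)).PosSemidef := by
  have h := hR.conjTranspose_mul_mul_same
    (fromCols (a • (1 : Matrix n n ℂ)) (b • (1 : Matrix n n ℂ)))
  rw [conjTranspose_fromCols_eq_fromRows_conjTranspose, fromRows_mul, fromRows_mul_fromCols] at h
  simpa [smul_smul, mul_comm] using h

section GeometricMean

variable {n : Type*} [Fintype n] [DecidableEq n]

lemma msqrt_eq_cfcSqrt (A : Matrix n n ℂ) : msqrt A = CFC.sqrt A := by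
  by_cases hA : A.PosSemidef
  · rw [msqrt, dif_pos hA, CFC.sqrt_eq_real_sqrt A hA.nonneg, cfcₙ_eq_cfc, hA.1.cfc_eq]
    rfl
  · rw [msqrt, dif_neg hA, CFC.sqrt, cfcₙ_apply_of_not_predicate]
    exact fun h => hA h.posSemidef

lemma gm_eq_cfcSqrt (A B : Matrix n n ℂ) :
    gm A B = CFC.sqrt A * CFC.sqrt ((CFC.sqrt A)⁻¹ * B * (CFC.sqrt A)⁻¹) * CFC.sqrt A := by
  simp only [gm, msqrt_eq_cfcSqrt]

lemma trace_gm {A : Matrix n n ℂ} (hA : A.PosSemidef) (B : Matrix n n ℂ) :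
    (gm A B).trace = (A * msqrt ((msqrt A)⁻¹ * B * (msqrt A)⁻¹)).trace := by
  rw [gm, trace_mul_cycle, msqrt_eq_cfcSqrt A, CFC.sqrt_mul_sqrt_self A hA.nonneg]

lemma le_gm_of_mul_inv_mul_le {A B X : Matrix n n ℂ} (hA : A.PosDef) (hX : 0 ≤ X)
    (h : X * A⁻¹ * X ≤ B) : X ≤ gm A B := by
  set s := CFC.sqrt A
  have hs : star s = s := (CFC.sqrt_nonneg A).isSelfAdjoint
  have hsinv : star s⁻¹ = s⁻¹ := by
    rw [star_eq_conjTranspose, conjTranspose_nonsing_inv, ← star_eq_conjTranspose, hs]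
  have hsu : IsUnit s := (CFC.isUnit_sqrt_iff A hA.posSemidef.nonneg).mpr hA.isUnit
  have hss : s * s = A := CFC.sqrt_mul_sqrt_self A hA.posSemidef.nonneg
  set Y := s⁻¹ * X * s⁻¹
  have hY : 0 ≤ Y := by simpa [hsinv] using star_left_conjugate_nonneg hX s⁻¹
  have hY2 : Y ^ 2 ≤ s⁻¹ * B * s⁻¹ := by
    have hsq : Y ^ 2 = s⁻¹ * (X * A⁻¹ * X) * s⁻¹ := by
      rw [← hss, Matrix.mul_inv_rev]
      simp only [Y, pow_two, mul_assoc]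
    rw [hsq]
    simpa [hsinv] using star_left_conjugate_le_conjugate h s⁻¹
  have hYle : Y ≤ CFC.sqrt (s⁻¹ * B * s⁻¹) := CFC.sqrt_sq Y hY ▸ CFC.sqrt_le_sqrt _ _ hY2
  rw [gm_eq_cfcSqrt, ← mul_nonsing_inv_mul_nonsing_inv_mul hsu X]
  simpa [hs] using star_left_conjugate_le_conjugate hYle s

end GeometricMean

noncomputable def fidelityMatrix {ι n : Type*} [Fintype ι] (R : ι → Matrix n n ℂ) (p q : ι → ℝ) :
    Matrix n n ℂ :=
  ∑ x, (√(p x * q x) : ℂ) • R x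

namespace IsReverseTest

variable {d m : ℕ} {ρ σ : Matrix (Fin d) (Fin d) ℂ} {R : Fin m → Matrix (Fin d) (Fin d) ℂ}
  {p q : Fin m → ℝ}

lemma trace_fidelityMatrix (hT : IsReverseTest ρ σ R p q) :
    (fidelityMatrix R p q).trace = ↑(∑ x, √(p x * q x)) :=
  (ofReal_sum_eq_trace_sum_smul (fun x => (hT.states x).2) _).symm

lemma posSemidef_fidelityMatrix (hT : IsReverseTest ρ σ R p q) :
    (fidelityMatrix R p q).PosSemidef :=
  posSemidef_sum _ fun x _ => (hT.states x).1.smul (by simp)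

lemma posSemidef_fromBlocks (hT : IsReverseTest ρ σ R p q) :
    (fromBlocks ρ (fidelityMatrix R p q) (fidelityMatrix R p q) σ).PosSemidef := by
  have hblocks : fromBlocks ρ (fidelityMatrix R p q) (fidelityMatrix R p q) σ =
      ∑ x, fromBlocks ((√(p x) * √(p x)) • R x) ((√(p x) * √(q x)) • R x)
        ((√(p x) * √(q x)) • R x) ((√(q x) * √(q x)) • R x) := by
    simp only [Real.mul_self_sqrt (hT.p_nonneg _), Real.mul_self_sqrt (hT.q_nonneg _),
      ← Real.sqrt_mul (hT.p_nonneg _), ← hT.rho_eq, ← hT.sigma_eq, fidelityMatrix]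
    ext (i | i) (j | j) <;> simp [Matrix.sum_apply]
  rw [hblocks]
  exact posSemidef_sum _ fun x _ => posSemidef_fromBlocks_smul (hT.states x).1 _ _

lemma fidelityMatrix_mul_inv_mul_le (hρ : ρ.PosDef) (hT : IsReverseTest ρ σ R p q) :
    fidelityMatrix R p q * ρ⁻¹ * fidelityMatrix R p q ≤ σ := by
  have := hρ.isUnit.invertible
  have h := (PosDef.fromBlocks₁₁ (fidelityMatrix R p q) σ hρ).mp
  rw [hT.posSemidef_fidelityMatrix.1.eq] at h
  exact le_iff.mpr (h hT.posSemidef_fromBlocks)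

lemma sum_sqrt_le_re_trace_gm (hρ : ρ.PosDef) (hT : IsReverseTest ρ σ R p q) :
    ∑ x, √(p x * q x) ≤ (gm ρ σ).trace.re := by
  have hle := le_gm_of_mul_inv_mul_le hρ hT.posSemidef_fidelityMatrix.nonneg
    (hT.fidelityMatrix_mul_inv_mul_le hρ)
  have := (Complex.le_def.mp ((tracePositiveLinearMap (Fin d) ℂ ℂ).monotone' hle)).1
  simpa [hT.trace_fidelityMatrix] using this

end IsReverseTest

lemma exists_isReverseTest_of_eq_mul_diagonal_mul {d m : ℕ} {ρ σ : Matrix (Fin d) (Fin d) ℂ}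
    (hρ1 : ρ.trace = 1) (hσ1 : σ.trace = 1) (W : Matrix (Fin d) (Fin m) ℂ)
    (hW : ∀ i, W.col i ≠ 0) {l : Fin m → ℝ} (hl : ∀ i, 0 ≤ l i) (hρ : W * Wᴴ = ρ)
    (hσ : W * diagonal (fun i => (l i : ℂ)) * Wᴴ = σ) :
    ∃ (R : Fin m → Matrix (Fin d) (Fin d) ℂ) (p q : Fin m → ℝ), IsReverseTest ρ σ R p q ∧
      fidelityMatrix R p q = W * diagonal (fun i => (√(l i) : ℂ)) * Wᴴ := by
  set p : Fin m → ℝ := fun i => (star (W.col i) ⬝ᵥ W.col i).re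
  have hp : ∀ i, 0 < p i := fun i => by
    simpa using (Complex.lt_def.mp (dotProduct_star_self_pos_iff.mpr (hW i))).1
  have hMtr : ∀ i, (vecMulVec (W.col i) (star (W.col i))).trace = p i := fun i => by
    rw [trace_vecMulVec, dotProduct_comm]
    exact Complex.eq_re_of_ofReal_le (r := 0) (by exact_mod_cast dotProduct_star_self_nonneg _)
  set R : Fin m → Matrix (Fin d) (Fin d) ℂ :=
    fun i => ((p i)⁻¹ : ℂ) • vecMulVec (W.col i) (star (W.col i))
  have hR : ∀ i, IsDensity (R i) := fun i =>
    ⟨(posSemidef_vecMulVec_self_star _).smul (by simpa using (hp i).le), by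
      rw [trace_smul, hMtr, smul_eq_mul, inv_mul_cancel₀ (by exact_mod_cast (hp i).ne')]⟩
  have hsum : ∀ c : Fin m → ℝ,
      ∑ i, ((c i * p i : ℝ) : ℂ) • R i = W * diagonal (fun i => (c i : ℂ)) * Wᴴ := by
    intro c
    rw [← sum_smul_vecMulVec_col]
    refine Finset.sum_congr rfl fun i _ => ?_
    rw [smul_smul]
    congr 1
    push_cast
    field_simp [(hp i).ne']
  have hρR : ∑ i, (p i : ℂ) • R i = ρ := by simpa [← hρ] using hsum 1
  have hσR : ∑ i, ((l i * p i : ℝ) : ℂ) • R i = σ := hσ ▸ hsum l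
  refine ⟨R, p, fun i => l i * p i, ⟨hR, fun i => (hp i).le, fun i => mul_nonneg (hl i) (hp i).le,
    ?_, ?_, hρR, hσR⟩, ?_⟩
  · exact_mod_cast (ofReal_sum_eq_trace_sum_smul (fun i => (hR i).2) p).trans (hρR ▸ hρ1)
  · exact_mod_cast (ofReal_sum_eq_trace_sum_smul (fun i => (hR i).2) _).trans (hσR ▸ hσ1)
  · rw [← hsum]
    refine Finset.sum_congr rfl fun i _ => ?_
    rw [mul_left_comm, Real.sqrt_mul (hl i), Real.sqrt_mul_self (hp i).le]

lemma exists_isReverseTest_fidelityMatrix_eq_gm {d : ℕ} {ρ σ : Matrix (Fin d) (Fin d) ℂ}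
    (hρ : ρ.PosDef) (hσ : σ.PosSemidef) (hρ1 : ρ.trace = 1) (hσ1 : σ.trace = 1) :
    ∃ (R : Fin d → Matrix (Fin d) (Fin d) ℂ) (p q : Fin d → ℝ), IsReverseTest ρ σ R p q ∧
      fidelityMatrix R p q = gm ρ σ := by
  set s := CFC.sqrt ρ
  have hs : sᴴ = s := (CFC.sqrt_nonneg ρ).isSelfAdjoint
  have hsu : IsUnit s := (CFC.isUnit_sqrt_iff ρ hρ.posSemidef.nonneg).mpr hρ.isUnit
  have hss : s * s = ρ := CFC.sqrt_mul_sqrt_self ρ hρ.posSemidef.nonneg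
  set C := s⁻¹ * σ * s⁻¹
  have hC : C.PosSemidef := by
    simpa [conjTranspose_nonsing_inv, hs] using hσ.conjTranspose_mul_mul_same s⁻¹
  set V : Matrix (Fin d) (Fin d) ℂ := (hC.1.eigenvectorUnitary : Matrix (Fin d) (Fin d) ℂ)
  have hVV : V * Vᴴ = 1 := mem_unitaryGroup_iff.mp hC.1.eigenvectorUnitary.2
  have hconj : ∀ c : Fin d → ℂ,
      s * V * diagonal c * (s * V)ᴴ = s * (V * diagonal c * Vᴴ) * s :=
    fun c => by simp only [conjTranspose_mul, hs, mul_assoc]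
  have hcol : ∀ i, (s * V).col i ≠ 0 := fun i h => by
    have := mulVec_injective_of_isUnit (hsu.mul Unitary.isUnit_coe)
      ((mulVec_single_one _ i).trans (h.trans (mulVec_zero _).symm))
    simpa using congrFun this i
  obtain ⟨R, p, q, hT, hX⟩ := exists_isReverseTest_of_eq_mul_diagonal_mul hρ1 hσ1 (s * V) hcol
    (l := hC.1.eigenvalues) hC.eigenvalues_nonneg
    (by rw [conjTranspose_mul, hs, mul_assoc, ← mul_assoc V, hVV, one_mul, hss])
    (by
      rw [hconj, ← mul_nonsing_inv_mul_nonsing_inv_mul hsu σ]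
      congr 2
      exact hC.1.spectral_theorem.symm)
  refine ⟨R, p, q, hT, ?_⟩
  rw [hX, hconj, gm_eq_cfcSqrt, ← msqrt_eq_cfcSqrt C, msqrt, dif_pos hC]
  rfl

theorem stmt2 {d : ℕ} (ρ σ : Matrix (Fin d) (Fin d) ℂ)
    (hρ : ρ.PosDef) (hσ : σ.PosDef) (hρ1 : ρ.trace = 1) (hσ1 : σ.trace = 1) :
    Fmin ρ σ = ((ρ * msqrt ((msqrt ρ)⁻¹ * σ * (msqrt ρ)⁻¹)).trace).re := by
  rw [← trace_gm hρ.posSemidef]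
  obtain ⟨R, p, q, hT, hX⟩ := exists_isReverseTest_fidelityMatrix_eq_gm hρ hσ.posSemidef hρ1 hσ1
  refine IsGreatest.csSup_eq ⟨⟨d, R, p, q, hT, ?_⟩, ?_⟩
  · rw [← hX, hT.trace_fidelityMatrix, Complex.ofReal_re]
  · rintro _ ⟨m, R, p, q, hT, rfl⟩
    exact hT.sum_sqrt_le_re_trace_gm hρ
end

section
/- Suppose F^Q is a real-valued function of pairs of density matrices that (N) coincides with classical fidelity F(p,q)=Σ√(p q) on commuting (diagonal) pairs, and (M) is monotone increasing under all CPTP maps. Then for all density matrices ρ, σ: F_min(ρ,σ) ≤ F^Q(ρ,σ) ≤ F(ρ,σ), where F_min(ρ,σ) = tr(ρ#σ) and F(ρ,σ) = tr√(√σ ρ √σ) is the Uhlmann fidelity. -/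
open Matrix BigOperators
open scoped ComplexOrder Classical

/-!
Both bounds come from monotonicity under one measure-and-prepare channel linking `(ρ, σ)` to a
commuting pair whose classical fidelity is the target value.

Lower bound: with `r = √ρ` and `√(r⁻¹ σ r⁻¹) = U diag(λ) U*`, the channel that reads the diagonal
of its input and prepares `r uᵢ uᵢ* r / pᵢ`, where `pᵢ = ⟨uᵢ, ρ uᵢ⟩`, is a reverse test sending
`diag p ↦ ρ` and `diag (λ² p) ↦ σ`; its classical fidelity is `∑ λᵢ pᵢ = tr (ρ # σ)`.

Upper bound: with `s = √σ`, the operator `M = s⁻¹ √(s ρ s) s⁻¹ ≥ 0` satisfies `M σ M = ρ`.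
Measuring in an eigenbasis `M = U diag(λ) U*` gives outcome distributions with `pᵢ = λᵢ² qᵢ`,
so `∑ √(pᵢ qᵢ) = ∑ λᵢ qᵢ = tr (s M s) = tr √(s ρ s)`.
-/

open scoped Kronecker

namespace Matrix

variable {n : Type*} [Fintype n] [DecidableEq n] {A : Matrix n n ℂ}

lemma msqrt_of_posSemidef (h : A.PosSemidef) :
    msqrt A = (h.1.eigenvectorUnitary : Matrix n n ℂ) *
      diagonal ((↑) ∘ Real.sqrt ∘ h.1.eigenvalues) * (star h.1.eigenvectorUnitary : Matrix n n ℂ) :=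
  dif_pos h

lemma posSemidef_msqrt (h : A.PosSemidef) : (msqrt A).PosSemidef := by
  rw [msqrt_of_posSemidef h, star_eq_conjTranspose]
  refine PosSemidef.mul_mul_conjTranspose_same ?_ _
  exact posSemidef_diagonal_iff.mpr fun i => by simp [Real.sqrt_nonneg]

lemma msqrt_mul_msqrt (h : A.PosSemidef) : msqrt A * msqrt A = A := by
  conv_rhs => rw [h.1.spectral_theorem, Unitary.conjStarAlgAut_apply]
  set U : Matrix n n ℂ := ↑h.1.eigenvectorUnitary
  have hUU : star U * U = 1 := Unitary.coe_star_mul_self _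
  have hsqrt : ∀ i, Real.sqrt (h.1.eigenvalues i) * Real.sqrt (h.1.eigenvalues i) =
      h.1.eigenvalues i := fun i => Real.mul_self_sqrt (h.eigenvalues_nonneg i)
  rw [msqrt_of_posSemidef h]
  calc _ = U * (diagonal ((↑) ∘ Real.sqrt ∘ h.1.eigenvalues) * (star U * U) *
        diagonal ((↑) ∘ Real.sqrt ∘ h.1.eigenvalues)) * star U := by noncomm_ring
    _ = _ := by
      rw [hUU, Matrix.mul_one, diagonal_mul_diagonal]
      simp only [Function.comp_apply, ← Complex.ofReal_mul, hsqrt]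
      rfl

lemma isUnit_det_msqrt (h : A.PosDef) : IsUnit (msqrt A).det := by
  rw [isUnit_iff_ne_zero]
  intro h0
  have := congrArg det (msqrt_mul_msqrt h.posSemidef)
  rw [det_mul, h0, zero_mul] at this
  exact h.det_pos.ne' this.symm

lemma trace_mul_diagonal_mul (A B : Matrix n n ℂ) (f : n → ℂ) :
    (A * diagonal f * B).trace = ∑ i, f i * (B * A) i i := by
  rw [trace_mul_cycle]
  simp [trace, mul_diagonal, mul_comm]

lemma trace_mul_single_one_mul (A B : Matrix n n ℂ) (i : n) :
    (A * single i i 1 * B).trace = (B * A) i i := by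
  rw [trace_mul_cycle, trace_mul_single]
  simp

lemma sum_smul_mul_single_mul (A B : Matrix n n ℂ) (f : n → ℂ) :
    ∑ i, f i • (A * single i i 1 * B) = A * diagonal f * B := by
  simp only [← sum_single_eq_diagonal, Matrix.mul_sum, Matrix.sum_mul]
  refine Finset.sum_congr rfl fun i _ => ?_
  rw [← Matrix.smul_mul, ← Matrix.mul_smul, smul_single, smul_eq_mul, mul_one]

lemma posSemidef_inv_mul_mul_inv {A X : Matrix n n ℂ} (hA : A.IsHermitian) (hX : X.PosSemidef) :
    (A⁻¹ * X * A⁻¹).PosSemidef := by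
  simpa [conjTranspose_nonsing_inv, hA.eq] using hX.mul_mul_conjTranspose_same A⁻¹

lemma mul_inv_mul_mul_inv_mul {A X : Matrix n n ℂ} (hA : IsUnit A.det) :
    A * (A⁻¹ * X * A⁻¹) * A = X := by
  simp only [← Matrix.mul_assoc, mul_nonsing_inv A hA, Matrix.one_mul]
  rw [Matrix.mul_assoc, nonsing_inv_mul A hA, Matrix.mul_one]

lemma inv_mul_mul_mul_mul_inv {A X : Matrix n n ℂ} (hA : IsUnit A.det) :
    A⁻¹ * (A * X * A) * A⁻¹ = X := by
  simp only [← Matrix.mul_assoc, nonsing_inv_mul A hA, Matrix.one_mul]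
  rw [Matrix.mul_assoc, mul_nonsing_inv A hA, Matrix.mul_one]

lemma unitary_conj_diagonal_mul {U : Matrix n n ℂ} (hU : U ∈ unitaryGroup n ℂ) (f g : n → ℂ) :
    (U * diagonal f * star U) * (U * diagonal g * star U) = U * diagonal (f * g) * star U := by
  calc U * diagonal f * star U * (U * diagonal g * star U)
      = U * (diagonal f * (star U * U) * diagonal g) * star U := by noncomm_ring
    _ = U * diagonal (f * g) * star U := by
      rw [Unitary.star_mul_self_of_mem hU, Matrix.mul_one, diagonal_mul_diagonal]
      rfl

end Matrix

lemma Matrix.posSemidef_single_one {n : Type*} [DecidableEq n] (i : n) :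
    (single i i (1 : ℂ)).PosSemidef := by
  rw [← diagonal_single]
  exact posSemidef_diagonal_iff.mpr fun j => by by_cases h : j = i <;> simp [h]

lemma isDensity_diagonal {n : Type*} [Fintype n] [DecidableEq n] {p : n → ℝ}
    (hp : ∀ x, 0 ≤ p x) (h1 : ∑ x, p x = 1) : IsDensity (diagonal fun x => (p x : ℂ)) :=
  ⟨posSemidef_diagonal_iff.mpr fun x => Complex.zero_le_real.mpr (hp x), by
    rw [trace_diagonal, ← Complex.ofReal_sum, h1, Complex.ofReal_one]⟩

section BasisMeasurement

variable {n : Type*} [Fintype n]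

-- Outcome distribution of measuring `X` in the orthonormal basis formed by the columns of `U`.
noncomputable def basisProb (U X : Matrix n n ℂ) (i : n) : ℝ :=
  ((star U * X * U) i i).re

variable {U X : Matrix n n ℂ}

lemma ofReal_basisProb (hX : X.IsHermitian) (i : n) :
    (basisProb U X i : ℂ) = (star U * X * U) i i := by
  rw [star_eq_conjTranspose]
  exact (isHermitian_conjTranspose_mul_mul _ hX).coe_re_apply_self i

lemma basisProb_nonneg (hX : X.PosSemidef) (i : n) : 0 ≤ basisProb U X i := by
  have := (hX.conjTranspose_mul_mul_same U).diag_nonneg (i := i)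
  rw [← star_eq_conjTranspose] at this
  exact Complex.nonneg_iff.mp this |>.1

lemma basisProb_pos [DecidableEq n] (hU : U ∈ unitaryGroup n ℂ) (hX : X.PosDef) (i : n) :
    0 < basisProb U X i := by
  have := (hX.conjTranspose_mul_mul_same
    (mulVec_injective_of_isUnit (Unitary.isUnit_coe (U := ⟨U, hU⟩)))).diag_pos (i := i)
  rw [← star_eq_conjTranspose] at this
  exact Complex.pos_iff.mp this |>.1

lemma sum_basisProb [DecidableEq n] (hU : U ∈ unitaryGroup n ℂ) (X : Matrix n n ℂ) :
    ∑ i, basisProb U X i = X.trace.re := by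
  simp only [basisProb]
  rw [← Complex.re_sum]
  change (trace (star U * X * U)).re = _
  rw [trace_mul_cycle, Unitary.mul_star_self_of_mem hU, Matrix.one_mul]

lemma trace_mul_diagonal_mul_eq_sum_basisProb [DecidableEq n] {r ρ : Matrix n n ℂ}
    (hρ : ρ.IsHermitian) (hrr : r * r = ρ) (f : n → ℂ) :
    (r * U * diagonal f * (star U * r)).trace = ∑ i, f i * basisProb U ρ i := by
  rw [trace_mul_diagonal_mul]
  refine Finset.sum_congr rfl fun i _ => ?_
  rw [ofReal_basisProb hρ, ← hrr]
  simp only [Matrix.mul_assoc]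

lemma basisProb_conj_diagonal_mul_mul [DecidableEq n] (hU : U ∈ unitaryGroup n ℂ) (f : n → ℝ)
    (X : Matrix n n ℂ) (i : n) :
    basisProb U ((U * diagonal (fun i => (f i : ℂ)) * star U) * X *
      (U * diagonal (fun i => (f i : ℂ)) * star U)) i = f i ^ 2 * basisProb U X i := by
  have h : star U * ((U * diagonal (fun i => (f i : ℂ)) * star U) * X *
      (U * diagonal (fun i => (f i : ℂ)) * star U)) * U =
      diagonal (fun i => (f i : ℂ)) * (star U * X * U) * diagonal (fun i => (f i : ℂ)) := by
    have hUU := Unitary.star_mul_self_of_mem hU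
    calc _ = (star U * U) * diagonal (fun i => (f i : ℂ)) * (star U * X * U) *
          diagonal (fun i => (f i : ℂ)) * (star U * U) := by noncomm_ring
      _ = _ := by rw [hUU, Matrix.one_mul, Matrix.mul_one]
  simp only [basisProb, h, mul_diagonal, diagonal_mul, Complex.mul_re, Complex.ofReal_re,
    Complex.ofReal_im]
  ring

end BasisMeasurement

section MeasurePrepare

variable {ι : Type*} [Fintype ι] {d e : ℕ}

noncomputable def measurePrepare (M : ι → Matrix (Fin d) (Fin d) ℂ)
    (R : ι → Matrix (Fin e) (Fin e) ℂ) :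
    Matrix (Fin d) (Fin d) ℂ →ₗ[ℂ] Matrix (Fin e) (Fin e) ℂ :=
  ∑ i, ((Matrix.traceLinearMap (Fin d) ℂ ℂ).comp (LinearMap.mulLeft ℂ (M i))).smulRight (R i)

lemma measurePrepare_apply (M : ι → Matrix (Fin d) (Fin d) ℂ)
    (R : ι → Matrix (Fin e) (Fin e) ℂ) (X : Matrix (Fin d) (Fin d) ℂ) :
    measurePrepare M R X = ∑ i, (M i * X).trace • R i := by
  simp [measurePrepare]

lemma choiMatrix_measurePrepare (M : ι → Matrix (Fin d) (Fin d) ℂ)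
    (R : ι → Matrix (Fin e) (Fin e) ℂ) :
    choiMatrix (measurePrepare M R) = ∑ i, (M i)ᵀ ⊗ₖ R i := by
  ext ⟨a, b⟩ ⟨a', b'⟩
  simp [choiMatrix, measurePrepare_apply, Matrix.sum_apply, trace_mul_single]

lemma isCPTP_measurePrepare {M : ι → Matrix (Fin d) (Fin d) ℂ}
    {R : ι → Matrix (Fin e) (Fin e) ℂ} (hM : ∀ i, (M i).PosSemidef) (hM1 : ∑ i, M i = 1)
    (hR : ∀ i, IsDensity (R i)) : IsCPTP (measurePrepare M R) := by
  refine ⟨?_, fun X => ?_⟩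
  · rw [choiMatrix_measurePrepare]
    exact posSemidef_sum _ fun i _ => (hM i).transpose.kronecker (hR i).1
  · simp only [measurePrepare_apply, trace_sum, trace_smul, (hR _).2, smul_eq_mul, mul_one]
    rw [← trace_sum, ← Finset.sum_mul, hM1, Matrix.one_mul]

end MeasurePrepare

section QuantumFidelity

variable {d : ℕ}

def ExtendsClassicalFidelity (FQ : Matrix (Fin d) (Fin d) ℂ → Matrix (Fin d) (Fin d) ℂ → ℝ) :
    Prop :=
  ∀ p q : Fin d → ℝ, (∀ x, 0 ≤ p x) → (∀ x, 0 ≤ q x) →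
    ∑ x, p x = 1 → ∑ x, q x = 1 →
    FQ (Matrix.diagonal fun x => (p x : ℂ)) (Matrix.diagonal fun x => (q x : ℂ)) =
      ∑ x, Real.sqrt (p x * q x)

def IsMonotoneUnderCPTP (FQ : Matrix (Fin d) (Fin d) ℂ → Matrix (Fin d) (Fin d) ℂ → ℝ) :
    Prop :=
  ∀ Λ : Matrix (Fin d) (Fin d) ℂ →ₗ[ℂ] Matrix (Fin d) (Fin d) ℂ, IsCPTP Λ →
    ∀ ρ σ : Matrix (Fin d) (Fin d) ℂ, IsDensity ρ → IsDensity σ →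
      FQ ρ σ ≤ FQ (Λ ρ) (Λ σ)

variable {FQ : Matrix (Fin d) (Fin d) ℂ → Matrix (Fin d) (Fin d) ℂ → ℝ}
  {ρ σ : Matrix (Fin d) (Fin d) ℂ}

lemma IsReverseTest.sum_sqrt_le {R : Fin d → Matrix (Fin d) (Fin d) ℂ} {p q : Fin d → ℝ}
    (hN : ExtendsClassicalFidelity FQ) (hM : IsMonotoneUnderCPTP FQ)
    (h : IsReverseTest ρ σ R p q) : ∑ x, Real.sqrt (p x * q x) ≤ FQ ρ σ := by
  set Λ := measurePrepare (fun x => single x x (1 : ℂ)) R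
  have hΛ (f : Fin d → ℝ) : Λ (diagonal fun x => (f x : ℂ)) = ∑ x, (f x : ℂ) • R x := by
    simp [Λ, measurePrepare_apply, trace_single_mul]
  have hΛ_cptp : IsCPTP Λ :=
    isCPTP_measurePrepare posSemidef_single_one (by simp [sum_single_eq_diagonal]) h.states
  have := hM Λ hΛ_cptp _ _ (isDensity_diagonal h.p_nonneg h.p_sum)
    (isDensity_diagonal h.q_nonneg h.q_sum)
  rwa [hΛ, hΛ, h.rho_eq, h.sigma_eq, hN p q h.p_nonneg h.q_nonneg h.p_sum h.q_sum] at this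

lemma le_sum_sqrt_basisProb (hN : ExtendsClassicalFidelity FQ) (hM : IsMonotoneUnderCPTP FQ)
    (hρ : IsDensity ρ) (hσ : IsDensity σ) {U : Matrix (Fin d) (Fin d) ℂ}
    (hU : U ∈ unitaryGroup (Fin d) ℂ) :
    FQ ρ σ ≤ ∑ i, Real.sqrt (basisProb U ρ i * basisProb U σ i) := by
  set Λ := measurePrepare (fun i => U * single i i 1 * star U)
    (fun i => single i i (1 : ℂ))
  have hΛ {X : Matrix (Fin d) (Fin d) ℂ} (hX : X.IsHermitian) :
      Λ X = diagonal fun i => (basisProb U X i : ℂ) := by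
    simp only [Λ, measurePrepare_apply, Matrix.mul_assoc _ _ X, trace_mul_single_one_mul,
      ← ofReal_basisProb hX, smul_single, smul_eq_mul, mul_one, sum_single_eq_diagonal]
  have hΛ_cptp : IsCPTP Λ := by
    refine isCPTP_measurePrepare (fun i => ?_) ?_ fun i => ?_
    · simpa [star_eq_conjTranspose] using
        (posSemidef_single_one i).mul_mul_conjTranspose_same U
    · rw [← Finset.sum_mul, ← Finset.mul_sum, sum_single_eq_diagonal, diagonal_one,
        Matrix.mul_one, Unitary.mul_star_self_of_mem hU]
    · exact ⟨posSemidef_single_one i, trace_single_eq_same _ _⟩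
  have hsum {X : Matrix (Fin d) (Fin d) ℂ} (hX : IsDensity X) : ∑ i, basisProb U X i = 1 := by
    rw [sum_basisProb hU, hX.2, Complex.one_re]
  have := hM Λ hΛ_cptp _ _ hρ hσ
  rwa [hΛ hρ.1.1, hΛ hσ.1.1, hN _ _ (basisProb_nonneg hρ.1) (basisProb_nonneg hσ.1)
    (hsum hρ) (hsum hσ)] at this

end QuantumFidelity

section ReverseTest

variable {d : ℕ} {ρ σ r U : Matrix (Fin d) (Fin d) ℂ} {w : Fin d → ℝ}

lemma isReverseTest_of_eq_conj (hr : r.IsHermitian) (hrr : r * r = ρ) (hρ : ρ.PosDef)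
    (hρ1 : ρ.trace = 1) (hσ1 : σ.trace = 1) (hU : U ∈ unitaryGroup (Fin d) ℂ)
    (hw : ∀ i, 0 ≤ w i) (hσ : r * U * diagonal (fun i => (w i : ℂ)) * (star U * r) = σ) :
    IsReverseTest ρ σ (fun i => (basisProb U ρ i : ℂ)⁻¹ • (r * U * single i i 1 * (star U * r)))
      (basisProb U ρ) (fun i => w i * basisProb U ρ i) := by
  have hp_ne (i : Fin d) : (basisProb U ρ i : ℂ) ≠ 0 :=
    Complex.ofReal_ne_zero.mpr (basisProb_pos hU hρ i).ne'
  have htrace := trace_mul_diagonal_mul_eq_sum_basisProb (U := U) hρ.1 hrr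
  have hmix (f : Fin d → ℝ) :
      ∑ i, ((f i * basisProb U ρ i : ℝ) : ℂ) • ((basisProb U ρ i : ℂ)⁻¹ •
        (r * U * single i i 1 * (star U * r))) =
        r * U * diagonal (fun i => (f i : ℂ)) * (star U * r) := by
    rw [← sum_smul_mul_single_mul]
    refine Finset.sum_congr rfl fun i _ => ?_
    rw [smul_smul, Complex.ofReal_mul, mul_assoc, mul_inv_cancel₀ (hp_ne i), mul_one]
  have hp := basisProb_nonneg (U := U) hρ.posSemidef
  refine ⟨fun i => ⟨?_, ?_⟩, hp, fun i => mul_nonneg (hw i) (hp i), ?_, ?_, ?_, ?_⟩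
  · have := (posSemidef_single_one i).mul_mul_conjTranspose_same (r * U)
    rw [conjTranspose_mul, hr.eq, ← star_eq_conjTranspose] at this
    exact this.smul (by simpa using hp i)
  · rw [trace_smul, ← diagonal_single, htrace]
    simp [Pi.single_apply, hp_ne i]
  · rw [sum_basisProb hU, hρ1, Complex.one_re]
  · have := congrArg (fun A => (trace A).re) hσ
    simpa [htrace, hσ1] using this
  · have h := hmix 1
    simp only [Pi.one_apply, one_mul, Complex.ofReal_one, diagonal_one, Matrix.mul_one] at h
    rw [h, Matrix.mul_assoc, ← Matrix.mul_assoc U, Unitary.mul_star_self_of_mem hU,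
      Matrix.one_mul, hrr]
  · exact (hmix w).trans hσ

end ReverseTest

section Bounds

variable {d : ℕ} {ρ σ : Matrix (Fin d) (Fin d) ℂ}

lemma exists_isReverseTest_sum_sqrt_eq_trace_gm (hρ : ρ.PosDef) (hσ : σ.PosDef)
    (hρ1 : ρ.trace = 1) (hσ1 : σ.trace = 1) :
    ∃ (R : Fin d → Matrix (Fin d) (Fin d) ℂ) (p q : Fin d → ℝ),
      IsReverseTest ρ σ R p q ∧ ∑ x, Real.sqrt (p x * q x) = (gm ρ σ).trace.re := by
  set r := msqrt ρ
  have hr : r.PosSemidef := posSemidef_msqrt hρ.posSemidef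
  have hrr : r * r = ρ := msqrt_mul_msqrt hρ.posSemidef
  have hK : (r⁻¹ * σ * r⁻¹).PosSemidef := posSemidef_inv_mul_mul_inv hr.1 hσ.posSemidef
  set W := msqrt (r⁻¹ * σ * r⁻¹)
  have hW : W.PosSemidef := posSemidef_msqrt hK
  set U : Matrix (Fin d) (Fin d) ℂ := ↑hW.1.eigenvectorUnitary
  have hU : U ∈ unitaryGroup (Fin d) ℂ := hW.1.eigenvectorUnitary.2
  set ev := hW.1.eigenvalues
  have hWU : W = U * diagonal (fun i => (ev i : ℂ)) * star U := hW.1.spectral_theorem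
  have hσU : r * U * diagonal (fun i => ((ev i ^ 2 : ℝ) : ℂ)) * (star U * r) = σ := by
    calc _ = r * (U * diagonal ((fun i => (ev i : ℂ)) * fun i => (ev i : ℂ)) * star U) * r := by
          simp only [Pi.mul_def, sq, Complex.ofReal_mul, Matrix.mul_assoc]
      _ = σ := by
        rw [← unitary_conj_diagonal_mul hU, ← hWU, msqrt_mul_msqrt hK,
          mul_inv_mul_mul_inv_mul (isUnit_det_msqrt hρ)]
  refine ⟨_, _, _, isReverseTest_of_eq_conj hr.1 hrr hρ hρ1 hσ1 hU (fun i => sq_nonneg _) hσU, ?_⟩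
  have hgm : gm ρ σ = r * U * diagonal (fun i => (ev i : ℂ)) * (star U * r) := by
    change r * W * r = _
    rw [hWU]
    noncomm_ring
  rw [hgm, trace_mul_diagonal_mul_eq_sum_basisProb hρ.1 hrr, Complex.re_sum]
  refine Finset.sum_congr rfl fun i _ => ?_
  have hp := basisProb_nonneg (U := U) hρ.posSemidef i
  rw [← Complex.ofReal_mul, Complex.ofReal_re,
    show basisProb U ρ i * (ev i ^ 2 * basisProb U ρ i) =
      (ev i * basisProb U ρ i) * (ev i * basisProb U ρ i) by ring,
    Real.sqrt_mul_self (mul_nonneg (hW.eigenvalues_nonneg i) hp)]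

lemma exists_unitary_sum_sqrt_basisProb_eq (hρ : ρ.PosDef) (hσ : σ.PosDef) :
    ∃ U ∈ unitaryGroup (Fin d) ℂ, ∑ i, Real.sqrt (basisProb U ρ i * basisProb U σ i) =
      (msqrt (msqrt σ * ρ * msqrt σ)).trace.re := by
  set s := msqrt σ
  have hs : s.PosSemidef := posSemidef_msqrt hσ.posSemidef
  have hs_det : IsUnit s.det := isUnit_det_msqrt hσ
  have hA : (s * ρ * s).PosSemidef := by
    simpa [hs.1.eq] using hρ.posSemidef.mul_mul_conjTranspose_same s
  set B := msqrt (s * ρ * s)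
  set M := s⁻¹ * B * s⁻¹
  have hM : M.PosSemidef := posSemidef_inv_mul_mul_inv hs.1 (posSemidef_msqrt hA)
  set U : Matrix (Fin d) (Fin d) ℂ := ↑hM.1.eigenvectorUnitary
  have hU : U ∈ unitaryGroup (Fin d) ℂ := hM.1.eigenvectorUnitary.2
  set ev := hM.1.eigenvalues
  have hMU : M = U * diagonal (fun i => (ev i : ℂ)) * star U := hM.1.spectral_theorem
  have hB : B = s * M * s := (mul_inv_mul_mul_inv_mul hs_det).symm
  have hρM : ρ = M * σ * M := calc
    ρ = s⁻¹ * (B * B) * s⁻¹ := by rw [msqrt_mul_msqrt hA, inv_mul_mul_mul_mul_inv hs_det]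
    _ = s⁻¹ * (s * (M * (s * s) * M) * s) * s⁻¹ := by rw [hB]; noncomm_ring
    _ = M * σ * M := by rw [inv_mul_mul_mul_mul_inv hs_det, msqrt_mul_msqrt hσ.posSemidef]
  refine ⟨U, hU, ?_⟩
  have hBU : B = s * U * diagonal (fun i => (ev i : ℂ)) * (star U * s) := by
    rw [hB, hMU]
    noncomm_ring
  rw [hBU, trace_mul_diagonal_mul_eq_sum_basisProb hσ.1 (msqrt_mul_msqrt hσ.posSemidef),
    Complex.re_sum]
  refine Finset.sum_congr rfl fun i _ => ?_
  have hq := basisProb_nonneg (U := U) hσ.posSemidef i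
  rw [hρM, hMU, basisProb_conj_diagonal_mul_mul hU, ← Complex.ofReal_mul, Complex.ofReal_re,
    show ev i ^ 2 * basisProb U σ i * basisProb U σ i =
      (ev i * basisProb U σ i) * (ev i * basisProb U σ i) by ring,
    Real.sqrt_mul_self (mul_nonneg (hM.eigenvalues_nonneg i) hq)]

end Bounds

theorem stmt5 {d : ℕ}
    (FQ : Matrix (Fin d) (Fin d) ℂ → Matrix (Fin d) (Fin d) ℂ → ℝ)
    (hN : ∀ p q : Fin d → ℝ, (∀ x, 0 ≤ p x) → (∀ x, 0 ≤ q x) →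
      ∑ x, p x = 1 → ∑ x, q x = 1 →
      FQ (Matrix.diagonal fun x => (p x : ℂ)) (Matrix.diagonal fun x => (q x : ℂ)) =
        ∑ x, Real.sqrt (p x * q x))
    (hM : ∀ Λ : Matrix (Fin d) (Fin d) ℂ →ₗ[ℂ] Matrix (Fin d) (Fin d) ℂ, IsCPTP Λ →
      ∀ ρ σ : Matrix (Fin d) (Fin d) ℂ, IsDensity ρ → IsDensity σ →
        FQ ρ σ ≤ FQ (Λ ρ) (Λ σ))
    (ρ σ : Matrix (Fin d) (Fin d) ℂ)
    (hρ : ρ.PosDef) (hσ : σ.PosDef) (hρ1 : ρ.trace = 1) (hσ1 : σ.trace = 1) :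
    ((gm ρ σ).trace).re ≤ FQ ρ σ ∧
      FQ ρ σ ≤ ((msqrt (msqrt σ * ρ * msqrt σ)).trace).re := by
  constructor
  · obtain ⟨R, p, q, hRpq, hsum⟩ := exists_isReverseTest_sum_sqrt_eq_trace_gm hρ hσ hρ1 hσ1
    exact hsum ▸ hRpq.sum_sqrt_le hN hM
  · obtain ⟨U, hU, hsum⟩ := exists_unitary_sum_sqrt_basisProb_eq hρ hσ
    exact hsum ▸ le_sum_sqrt_basisProb hN hM ⟨hρ.posSemidef, hρ1⟩ ⟨hσ.posSemidef, hσ1⟩ hU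
end

section
/- For a positive definite density matrix ρ and a unit vector φ in the support condition range of ρ, F_min(ρ, |φ⟩⟨φ|) = 1/‖ρ^{-1/2}|φ⟩‖, i.e., the maximal fidelity over reverse tests of {ρ, |φ⟩⟨φ|} equals (⟨φ|ρ^{-1}|φ⟩)^{-1/2}. -/
open Matrix BigOperators
open scoped ComplexOrder Classical

/-!
Write `P = |φ⟩⟨φ|` and `a = ⟨φ|ρ⁻¹|φ⟩`. Since `P` is a pure state, a reverse test must prepare
`P` itself at every outcome `x` with `q x > 0`; so, with `t = ∑_{q x > 0} p x`, the matrix `ρ - t P`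
is a nonnegative combination of states. By the Schur complement of `!![ρ, √t φ; √t φ†, 1]` this
means `t a ≤ 1`, and Cauchy–Schwarz gives `∑ √(p x q x) ≤ √t ≤ a^{-1/2}`. Equality is attained
by the test preparing `P` and `(ρ - a⁻¹ P) / (1 - a⁻¹)` (any state if `a = 1`) with
`p = (a⁻¹, 1 - a⁻¹)` and `q = (1, 0)`.
-/

section

variable {n : Type*} [Fintype n]

theorem Matrix.PosSemidef.mulVec_eq_zero_of_posSemidef_vecMulVec_sub {A : Matrix n n ℂ}
    (hA : A.PosSemidef) {φ : n → ℂ} (hle : (vecMulVec φ (star φ) - A).PosSemidef)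
    {v : n → ℂ} (hv : star φ ⬝ᵥ v = 0) : A *ᵥ v = 0 := by
  rw [← hA.dotProduct_mulVec_zero_iff]
  have hP : star v ⬝ᵥ vecMulVec φ (star φ) *ᵥ v = 0 := by
    rw [vecMulVec_mulVec, hv]
    simp
  have hle_v := hle.dotProduct_mulVec_nonneg v
  rw [sub_mulVec, dotProduct_sub, hP, zero_sub, neg_nonneg] at hle_v
  exact le_antisymm hle_v (hA.dotProduct_mulVec_nonneg v)

theorem Matrix.PosSemidef.eq_smul_of_posSemidef_vecMulVec_sub {A : Matrix n n ℂ}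
    (hA : A.PosSemidef) {φ : n → ℂ} (hφ : star φ ⬝ᵥ φ = 1)
    (hle : (vecMulVec φ (star φ) - A).PosSemidef) :
    A = (star φ ⬝ᵥ A *ᵥ φ) • vecMulVec φ (star φ) := by
  set P := vecMulVec φ (star φ)
  have hAP : A * P = A := by
    refine mulVec_injective (funext fun v => ?_)
    have hv : star φ ⬝ᵥ (v - (star φ ⬝ᵥ v) • φ) = 0 := by
      rw [dotProduct_sub, dotProduct_smul, hφ, smul_eq_mul, mul_one, sub_self]
    have hAv := hA.mulVec_eq_zero_of_posSemidef_vecMulVec_sub hle hv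
    rw [mulVec_sub, sub_eq_zero] at hAv
    rw [← mulVec_mulVec, vecMulVec_mulVec, op_smul_eq_smul, hAv]
  have hPA : P * A = A := by
    simpa [conjTranspose_mul, hA.1.eq, P, conjTranspose_vecMulVec] using congrArg (·ᴴ) hAP
  calc A = P * A * P := by rw [Matrix.mul_assoc, hAP, hPA]
    _ = (star φ ⬝ᵥ A *ᵥ φ) • P := by
      rw [mul_vecMulVec, ← mulVec_mulVec, vecMulVec_mulVec, op_smul_eq_smul, smul_vecMulVec]

theorem Matrix.PosSemidef.exists_isDensity_smul_eq {σ M : Matrix n n ℂ} (hσ : IsDensity σ)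
    (hM : M.PosSemidef) {s : ℝ} (hs : M.trace = s) : ∃ R, IsDensity R ∧ M = (s : ℂ) • R := by
  by_cases hs0 : s = 0
  · refine ⟨σ, hσ, ?_⟩
    rw [hs0, Complex.ofReal_zero, zero_smul, ← hM.trace_eq_zero_iff, hs, hs0, Complex.ofReal_zero]
  · have hs_nonneg : (0 : ℂ) ≤ (s : ℂ)⁻¹ := inv_nonneg.2 (hs ▸ hM.trace_nonneg)
    have hs_ne : (s : ℂ) ≠ 0 := Complex.ofReal_ne_zero.2 hs0
    refine ⟨(s : ℂ)⁻¹ • M, ⟨hM.smul hs_nonneg, ?_⟩, ?_⟩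
    · rw [trace_smul, hs, smul_eq_mul, inv_mul_cancel₀ hs_ne]
    · rw [smul_smul, mul_inv_cancel₀ hs_ne, one_smul]

variable [DecidableEq n]

/-- Schur complement of the block matrix `!![ρ, ψ; ψᴴ, 1]`, taken in both orders. -/
theorem Matrix.PosDef.posSemidef_sub_vecMulVec_iff {ρ : Matrix n n ℂ} (hρ : ρ.PosDef)
    (ψ : n → ℂ) :
    (ρ - vecMulVec ψ (star ψ)).PosSemidef ↔ star ψ ⬝ᵥ ρ⁻¹ *ᵥ ψ ≤ 1 := by
  have := hρ.isUnit.invertible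
  have : Invertible (1 : Matrix Unit Unit ℂ) := invertibleOne
  have h := (PosDef.fromBlocks₁₁ (replicateCol Unit ψ) 1 hρ).symm.trans
    (PosDef.fromBlocks₂₂ ρ (replicateCol Unit ψ) PosDef.one)
  rw [inv_one, Matrix.mul_one, conjTranspose_replicateCol, ← vecMulVec_eq] at h
  have hschur : 1 - replicateRow Unit (star ψ) * ρ⁻¹ * replicateCol Unit ψ =
      diagonal fun _ => 1 - star ψ ⬝ᵥ ρ⁻¹ *ᵥ ψ := by
    rw [Matrix.mul_assoc, ← replicateCol_mulVec, replicateRow_mul_replicateCol]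
    ext
    rfl
  rw [← h, hschur, posSemidef_diagonal_iff]
  simp

theorem Matrix.PosDef.posSemidef_sub_smul_vecMulVec_iff {ρ : Matrix n n ℂ} (hρ : ρ.PosDef)
    (φ : n → ℂ) {t : ℝ} (ht : 0 ≤ t) :
    (ρ - (t : ℂ) • vecMulVec φ (star φ)).PosSemidef ↔ t * (star φ ⬝ᵥ ρ⁻¹ *ᵥ φ).re ≤ 1 := by
  have him : (star φ ⬝ᵥ ρ⁻¹ *ᵥ φ).im = 0 :=
    (Complex.nonneg_iff.mp (hρ.inv.posSemidef.dotProduct_mulVec_nonneg φ)).2.symm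
  have h := hρ.posSemidef_sub_vecMulVec_iff ((√t : ℂ) • φ)
  rw [star_smul, Complex.star_def, Complex.conj_ofReal, smul_vecMulVec, vecMulVec_smul, smul_smul,
    ← Complex.ofReal_mul, Real.mul_self_sqrt ht, mulVec_smul, dotProduct_smul, smul_dotProduct,
    smul_smul, ← Complex.ofReal_mul, Real.mul_self_sqrt ht, smul_eq_mul, Complex.le_def] at h
  simpa [him] using h

theorem Matrix.PosDef.re_dotProduct_inv_mulVec_pos {ρ : Matrix n n ℂ} (hρ : ρ.PosDef)
    {φ : n → ℂ} (hφ : star φ ⬝ᵥ φ = 1) : 0 < (star φ ⬝ᵥ ρ⁻¹ *ᵥ φ).re :=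
  hρ.inv.re_dotProduct_pos fun h => by simp [h] at hφ

end

namespace IsReverseTest

variable {d m : ℕ} {ρ : Matrix (Fin d) (Fin d) ℂ} {φ : Fin d → ℂ}
  {R : Fin m → Matrix (Fin d) (Fin d) ℂ} {p q : Fin m → ℝ}

/-- Pure states are extreme points of the state space. -/
theorem eq_vecMulVec_of_ne_zero (hφ : star φ ⬝ᵥ φ = 1)
    (hT : IsReverseTest ρ (vecMulVec φ (star φ)) R p q) {x : Fin m} (hx : q x ≠ 0) :
    R x = vecMulVec φ (star φ) := by
  have hq : ∀ y, (0 : ℂ) ≤ q y := fun y => Complex.zero_le_real.2 (hT.q_nonneg y)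
  have hrest : (vecMulVec φ (star φ) - (q x : ℂ) • R x).PosSemidef := by
    rw [← hT.sigma_eq, ← Finset.add_sum_erase _ _ (Finset.mem_univ x), add_sub_cancel_left]
    exact posSemidef_sum _ fun y _ => (hT.states y).1.smul (hq y)
  have h := ((hT.states x).1.smul (hq x)).eq_smul_of_posSemidef_vecMulVec_sub hφ hrest
  have htr := congrArg trace h
  rw [trace_smul, (hT.states x).2, trace_smul, trace_vecMulVec, dotProduct_comm φ, hφ,
    smul_eq_mul, smul_eq_mul, mul_one, mul_one] at htr
  rw [← htr] at h
  exact smul_right_injective _ (Complex.ofReal_ne_zero.2 hx) h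

theorem sum_sqrt_mul_le (hρ : ρ.PosDef) (hφ : star φ ⬝ᵥ φ = 1)
    (hT : IsReverseTest ρ (vecMulVec φ (star φ)) R p q) :
    ∑ x, √(p x * q x) ≤ 1 / √(star φ ⬝ᵥ ρ⁻¹ *ᵥ φ).re := by
  set a := (star φ ⬝ᵥ ρ⁻¹ *ᵥ φ).re
  set F := Finset.univ.filter (q · ≠ 0)
  set t := ∑ x ∈ F, p x
  have hρt : ρ - (t : ℂ) • vecMulVec φ (star φ) =
      ∑ x ∈ Finset.univ.filter (¬q · ≠ 0), (p x : ℂ) • R x := by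
    rw [← hT.rho_eq, ← Finset.sum_filter_add_sum_filter_not Finset.univ (q · ≠ 0),
      Finset.sum_congr rfl fun x hx => by
        rw [hT.eq_vecMulVec_of_ne_zero hφ (Finset.mem_filter.1 hx).2],
      ← Finset.sum_smul, Complex.ofReal_sum, add_sub_cancel_left]
  have hta : t * a ≤ 1 := by
    refine (hρ.posSemidef_sub_smul_vecMulVec_iff φ
      (Finset.sum_nonneg fun x _ => hT.p_nonneg x)).1 ?_
    rw [hρt]
    exact posSemidef_sum _ fun x _ =>
      (hT.states x).1.smul (Complex.zero_le_real.2 (hT.p_nonneg x))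
  have hqF : ∑ x ∈ F, q x = 1 := by
    rw [Finset.sum_filter_ne_zero, hT.q_sum]
  calc ∑ x, √(p x * q x) = ∑ x ∈ F, √(p x) * √(q x) := by
        rw [Finset.sum_filter_of_ne fun x _ h => ?_]
        · exact Finset.sum_congr rfl fun x _ => Real.sqrt_mul (hT.p_nonneg x) _
        · intro hq
          simp [hq] at h
    _ ≤ √t * √(∑ x ∈ F, q x) := Real.sum_sqrt_mul_sqrt_le F hT.p_nonneg hT.q_nonneg
    _ = √t := by rw [hqF, Real.sqrt_one, mul_one]
    _ ≤ √(1 / a) := Real.sqrt_le_sqrt ((le_div_iff₀ (hρ.re_dotProduct_inv_mulVec_pos hφ)).2 hta)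
    _ = 1 / √a := by rw [one_div, Real.sqrt_inv, one_div]

end IsReverseTest

theorem exists_isReverseTest_sum_sqrt_mul_eq {d : ℕ} {ρ : Matrix (Fin d) (Fin d) ℂ}
    (hρ : ρ.PosDef) (hρ1 : ρ.trace = 1) {φ : Fin d → ℂ} (hφ : star φ ⬝ᵥ φ = 1) :
    ∃ (m : ℕ) (R : Fin m → Matrix (Fin d) (Fin d) ℂ) (p q : Fin m → ℝ),
      IsReverseTest ρ (vecMulVec φ (star φ)) R p q ∧
        1 / √(star φ ⬝ᵥ ρ⁻¹ *ᵥ φ).re = ∑ x, √(p x * q x) := by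
  set P := vecMulVec φ (star φ)
  set c := (star φ ⬝ᵥ ρ⁻¹ *ᵥ φ).re⁻¹
  have ha := hρ.re_dotProduct_inv_mulVec_pos hφ
  have hc : 0 ≤ c := inv_nonneg.2 ha.le
  have hP : IsDensity P :=
    ⟨posSemidef_vecMulVec_self_star φ, by rw [trace_vecMulVec, dotProduct_comm, hφ]⟩
  have hM : (ρ - (c : ℂ) • P).PosSemidef :=
    (hρ.posSemidef_sub_smul_vecMulVec_iff φ hc).2 (inv_mul_cancel₀ ha.ne').le
  have htr : (ρ - (c : ℂ) • P).trace = ((1 - c : ℝ) : ℂ) := by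
    rw [trace_sub, trace_smul, hP.2, hρ1]
    simp
  have hc1 : c ≤ 1 := by
    have := htr ▸ hM.trace_nonneg
    rw [Complex.zero_le_real] at this
    linarith
  obtain ⟨R₂, hR₂, hρR₂⟩ := hM.exists_isDensity_smul_eq hP htr
  refine ⟨2, ![P, R₂], ![c, 1 - c], ![1, 0], ⟨?_, ?_, ?_, ?_, ?_, ?_, ?_⟩, ?_⟩
  · exact Fin.forall_fin_two.2 ⟨hP, hR₂⟩
  · exact Fin.forall_fin_two.2 ⟨hc, sub_nonneg.2 hc1⟩
  · exact Fin.forall_fin_two.2 ⟨zero_le_one, le_rfl⟩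
  · simp
  · simp
  · simp only [Fin.sum_univ_two, cons_val_zero, cons_val_one]
    exact (eq_add_of_sub_eq' hρR₂).symm
  · simp
  · simp [c, Real.sqrt_inv]

theorem stmt9 {d : ℕ} (ρ : Matrix (Fin d) (Fin d) ℂ)
    (hρ : ρ.PosDef) (hρ1 : ρ.trace = 1)
    (φ : Fin d → ℂ) (hφ : star φ ⬝ᵥ φ = 1) :
    Fmin ρ (Matrix.vecMulVec φ (star φ)) =
      1 / Real.sqrt ((star φ ⬝ᵥ ρ⁻¹ *ᵥ φ).re) := by
  refine IsGreatest.csSup_eq ⟨exists_isReverseTest_sum_sqrt_mul_eq hρ hρ1 hφ, ?_⟩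
  rintro r ⟨m, R, p, q, hT, rfl⟩
  exact hT.sum_sqrt_mul_le hρ hφ
end

section
/- For distinct unit vectors ψ, φ (with |⟨ψ|φ⟩| < 1), F_min(|ψ⟩⟨ψ|, |φ⟩⟨φ|) = 0: any probability distributions p, q and CPTP map Φ with Φ(p)=|ψ⟩⟨ψ| and Φ(q)=|φ⟩⟨φ| satisfy Σ_x √(p(x)q(x)) = 0. -/
open Matrix BigOperators
open scoped ComplexOrder Classical

/-!
If `p x > 0`, the state `R x` appears in a convex decomposition of the pure state `ψψ*`, so it
annihilates every `w ⊥ ψ`; likewise, if `q x > 0`, it annihilates every `w ⊥ φ`. A matrix with both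
properties sends `ψ` to `|⟨ψ|φ⟩|² • (R x) ψ`, hence (as `|⟨ψ|φ⟩| < 1`) vanishes on `ψ` and therefore
everywhere, which contradicts `tr (R x) = 1`. So `p x q x = 0` for every `x`.
-/

section Orthogonal

variable {𝕜 n : Type*} [CommRing 𝕜] [StarRing 𝕜] [Fintype n]

theorem Matrix.mulVec_eq_smul_mulVec_of_forall_orthogonal {A : Matrix n n 𝕜} {ψ : n → 𝕜}
    (hψ : star ψ ⬝ᵥ ψ = 1) (hA : ∀ w, star ψ ⬝ᵥ w = 0 → A *ᵥ w = 0) (v : n → 𝕜) :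
    A *ᵥ v = (star ψ ⬝ᵥ v) • A *ᵥ ψ := by
  have hv : star ψ ⬝ᵥ (v - (star ψ ⬝ᵥ v) • ψ) = 0 := by
    rw [dotProduct_sub, dotProduct_smul, hψ, smul_eq_mul, mul_one, sub_self]
  rw [← mulVec_smul, ← sub_eq_zero, ← mulVec_sub]
  exact hA _ hv

end Orthogonal

section RCLike

variable {𝕜 ι n : Type*} [RCLike 𝕜] [Fintype n]

theorem Matrix.PosSemidef.mulVec_eq_zero_of_dotProduct_sum_mulVec_eq_zero {s : Finset ι}
    {B : ι → Matrix n n 𝕜} (hB : ∀ i ∈ s, (B i).PosSemidef) {w : n → 𝕜}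
    (hw : star w ⬝ᵥ (∑ i ∈ s, B i) *ᵥ w = 0) {i : ι} (hi : i ∈ s) : B i *ᵥ w = 0 := by
  rw [sum_mulVec, dotProduct_sum] at hw
  have hwi := (Finset.sum_eq_zero_iff_of_nonneg fun j hj =>
    (hB j hj).dotProduct_mulVec_nonneg w).mp hw i hi
  exact ((hB i hi).dotProduct_mulVec_zero_iff w).mp hwi

theorem Matrix.mulVec_eq_zero_of_sum_smul_eq_vecMulVec [Fintype ι] {c : ι → ℝ}
    {R : ι → Matrix n n 𝕜} (hR : ∀ i, (R i).PosSemidef) (hc : ∀ i, 0 ≤ c i) {ψ : n → 𝕜}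
    (h : ∑ i, (c i : 𝕜) • R i = vecMulVec ψ (star ψ)) {i : ι} (hci : c i ≠ 0) {w : n → 𝕜}
    (hw : star ψ ⬝ᵥ w = 0) : R i *ᵥ w = 0 := by
  have hsum : star w ⬝ᵥ (∑ j, (c j : 𝕜) • R j) *ᵥ w = 0 := by
    rw [h, vecMulVec_mulVec, hw]
    simp
  have hRw := PosSemidef.mulVec_eq_zero_of_dotProduct_sum_mulVec_eq_zero
    (fun j _ => (hR j).smul (RCLike.ofReal_nonneg.mpr (hc j))) hsum (Finset.mem_univ i)
  rwa [smul_mulVec, smul_eq_zero_iff_right (RCLike.ofReal_ne_zero.mpr hci)] at hRw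

theorem Matrix.eq_zero_of_forall_orthogonal_mulVec_eq_zero {A : Matrix n n 𝕜} {ψ φ : n → 𝕜}
    (hψ : star ψ ⬝ᵥ ψ = 1) (hφ : star φ ⬝ᵥ φ = 1) (hlt : ‖star ψ ⬝ᵥ φ‖ < 1)
    (hAψ : ∀ w, star ψ ⬝ᵥ w = 0 → A *ᵥ w = 0) (hAφ : ∀ w, star φ ⬝ᵥ w = 0 → A *ᵥ w = 0) :
    A = 0 := by
  have hψφ := mulVec_eq_smul_mulVec_of_forall_orthogonal hψ hAψ
  have hφψ := mulVec_eq_smul_mulVec_of_forall_orthogonal hφ hAφ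
  have hfix : A *ᵥ ψ = ((‖star ψ ⬝ᵥ φ‖ : 𝕜) ^ 2) • A *ᵥ ψ := calc
    A *ᵥ ψ = (star φ ⬝ᵥ ψ * star ψ ⬝ᵥ φ) • A *ᵥ ψ :=
      (hφψ ψ).trans (by rw [hψφ φ, smul_smul])
    _ = ((‖star ψ ⬝ᵥ φ‖ : 𝕜) ^ 2) • A *ᵥ ψ := by
      rw [star_dotProduct φ ψ, RCLike.star_def, RCLike.conj_mul]
  have hne : (1 : 𝕜) - (‖star ψ ⬝ᵥ φ‖ : 𝕜) ^ 2 ≠ 0 := by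
    rw [sub_ne_zero, ne_comm, ← RCLike.ofReal_pow, ← RCLike.ofReal_one, Ne, RCLike.ofReal_inj]
    nlinarith [norm_nonneg (star ψ ⬝ᵥ φ)]
  have hAψ0 : A *ᵥ ψ = 0 := by
    rwa [← sub_eq_zero, ← one_smul 𝕜 (A *ᵥ ψ), smul_smul, mul_one, ← sub_smul,
      smul_eq_zero_iff_right hne] at hfix
  classical
  exact ext_of_mulVec_single fun j => by rw [hψφ, hAψ0, smul_zero, zero_mulVec]

end RCLike

theorem stmt10 {d m : ℕ} (ψ φ : Fin d → ℂ)
    (hψ : star ψ ⬝ᵥ ψ = 1) (hφ : star φ ⬝ᵥ φ = 1)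
    (hlt : ‖star ψ ⬝ᵥ φ‖ < 1)
    (R : Fin m → Matrix (Fin d) (Fin d) ℂ) (p q : Fin m → ℝ)
    (h : IsReverseTest (Matrix.vecMulVec ψ (star ψ)) (Matrix.vecMulVec φ (star φ)) R p q) :
    ∑ x, Real.sqrt (p x * q x) = 0 := by
  refine Finset.sum_eq_zero fun x _ => ?_
  by_contra hx
  have hpx : p x ≠ 0 := fun h0 => hx (by simp [h0])
  have hqx : q x ≠ 0 := fun h0 => hx (by simp [h0])
  have hR : ∀ y, (R y).PosSemidef := fun y => (h.states y).1
  have hRx : R x = 0 := eq_zero_of_forall_orthogonal_mulVec_eq_zero hψ hφ hlt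
    (fun _ => mulVec_eq_zero_of_sum_smul_eq_vecMulVec hR h.p_nonneg h.rho_eq hpx)
    (fun _ => mulVec_eq_zero_of_sum_smul_eq_vecMulVec hR h.q_nonneg h.sigma_eq hqx)
  simpa [hRx] using (h.states x).2
end
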